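/- Identify F₃ = {−1,0,1} and let E = F₃ × F₃; let A_i = {(x,i) : x ∈ F₃} and B_j = {(j,y) : y ∈ F₃}. Let f be the rank function of the tic-tac-toe matroid on E. Then for z ∉ E there is no polymatroid g on E ∪ {z} extending f such that g({z} ∪ A_{−1}) = g(A_{−1}), g({z} ∪ A_1) = g(A_1), and g(A_{−1} ∪ {z}) + g(A_1 ∪ {z}) = g(A_{−1} ∪ A_1 ∪ {z}) + g({z}). That is, the tic-tac-toe matroid admits no single-element CI extension for the pair (A_{−1}, A_1), so it does not satisfy the common information property. -/

import Mathlib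

open Finset

/-- A polymatroid on a finite ground set `E`. -/
def IsPolymatroid {α : Type*} [DecidableEq α] (E : Finset α) (f : Finset α → ℝ) : Prop :=
  f ∅ = 0 ∧
  (∀ ⦃X Y : Finset α⦄, X ⊆ Y → Y ⊆ E → f X ≤ f Y) ∧
  (∀ ⦃X Y : Finset α⦄, X ⊆ E → Y ⊆ E → f (X ∪ Y) + f (X ∩ Y) ≤ f X + f Y)

/-- The points of the affine plane over `F₃`. -/
abbrev Pt := ZMod 3 × ZMod 3

/-- The horizontal line `A_i = {(x, i) : x ∈ F₃}`. -/
def lineA (i : ZMod 3) : Finset Pt := Finset.univ.image (fun x => (x, i))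

/-- The vertical line `B_j = {(j, y) : y ∈ F₃}`. -/
def lineB (j : ZMod 3) : Finset Pt := Finset.univ.image (fun y => (j, y))

/-- The circuit-hyperplanes of the tic-tac-toe matroid:
the sets `A_i ∪ B_j` with `(i, j) ≠ (0, 0)`. -/
def tttCH : Finset (Finset Pt) :=
  (Finset.univ.filter (fun p : ZMod 3 × ZMod 3 => p ≠ (0, 0))).image
    (fun p => lineA p.1 ∪ lineB p.2)

/-- The rank function of the tic-tac-toe matroid (a sparse paving matroid of rank 5):
`f(X) = |X|` if `|X| ≤ 4`, `f(X) = 4` if `X` is a circuit-hyperplane, and `f(X) = 5`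
otherwise when `|X| ≥ 5`. -/
noncomputable def tttRank (X : Finset Pt) : ℝ :=
  if X ∈ tttCH then 4 else min X.card 5

/-! Say that `S` spans the new element `z` when `g (insert z S) = g S`. Spanning passes to
supersets, and to the intersection of two spanning sets that form a modular pair of the rank
function. Starting from `A₋₁` and `A₁` it thus passes to the circuit-hyperplanes `A_{±1} ∪ B_j`,
to their intersections `B_j`, through `A₀ ∪ B_{±1}` to `A₀`, to `A₀ ∩ B₀ = {(0,0)}`, and since
`A₋₁, {(0,0)}` is a modular pair, to `∅`; so `g {z} = 0`. The modularity condition of the CI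
extension instead forces `g {z} = f A₋₁ + f A₁ - f (A₋₁ ∪ A₁) = 3 + 3 - 5 = 1`. -/

def Spans {α : Type*} [DecidableEq α] (f : Finset α → ℝ) (S : Finset α) (z : α) : Prop :=
  f (insert z S) = f S

namespace IsPolymatroid

variable {α : Type*} [DecidableEq α] {E : Finset α} {f : Finset α → ℝ} {z : α} {S T : Finset α}

theorem spans_of_subset (hf : IsPolymatroid E f) (hS : Spans f S z) (hST : S ⊆ T)
    (hTE : insert z T ⊆ E) : Spans f T z := by
  by_cases hzT : z ∈ T
  · rw [Spans, insert_eq_of_mem hzT]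
  refine le_antisymm ?_ (hf.2.1 (subset_insert z T) hTE)
  have hsub := hf.2.2 (subset_trans (subset_insert z T) hTE)
    (subset_trans (insert_subset_insert z hST) hTE)
  rw [union_insert, union_eq_left.mpr hST, inter_insert_of_notMem hzT,
    inter_eq_right.mpr hST] at hsub
  rw [Spans] at hS
  linarith

theorem spans_inter (hf : IsPolymatroid E f) (hSE : insert z S ⊆ E) (hTE : insert z T ⊆ E)
    (hS : Spans f S z) (hT : Spans f T z) (hmod : f S + f T = f (S ∪ T) + f (S ∩ T)) :
    Spans f (S ∩ T) z := by
  have hsub := hf.2.2 hSE hTE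
  rw [← insert_union_distrib, ← insert_inter_distrib] at hsub
  have hunion : f (S ∪ T) ≤ f (insert z (S ∪ T)) :=
    hf.2.1 (subset_insert _ _) (by rw [insert_union_distrib]; exact union_subset hSE hTE)
  have hinter : f (S ∩ T) ≤ f (insert z (S ∩ T)) :=
    hf.2.1 (subset_insert _ _) (subset_trans (insert_subset_insert z inter_subset_left) hSE)
  rw [Spans] at hS hT ⊢
  linarith

end IsPolymatroid

/-- A copy of `tttRank` with values in `ℕ`, so that rank identities are decidable. -/
def tttRankNat (X : Finset Pt) : ℕ :=
  if X ∈ tttCH then 4 else min X.card 5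

theorem tttRank_eq_natCast (X : Finset Pt) : tttRank X = tttRankNat X := by
  unfold tttRank tttRankNat
  split_ifs <;> push_cast <;> rfl

section Extension

variable {g : Finset (Option Pt) → ℝ} {S T U : Finset Pt}

theorem spans_image_of_subset (hg : IsPolymatroid univ g) (hS : Spans g (S.image some) none)
    (hST : S ⊆ T) : Spans g (T.image some) none :=
  hg.spans_of_subset hS (image_subset_image hST) (subset_univ _)

theorem spans_image_of_modular (hg : IsPolymatroid univ g)
    (hext : ∀ X : Finset Pt, g (X.image some) = tttRank X)
    (hS : Spans g (S.image some) none) (hT : Spans g (T.image some) none)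
    (hmod : tttRankNat S + tttRankNat T = tttRankNat (S ∪ T) + tttRankNat U)
    (hU : S ∩ T = U) : Spans g (U.image some) none := by
  subst hU
  rw [image_inter _ _ (Option.some_injective _)]
  refine hg.spans_inter (subset_univ _) (subset_univ _) hS hT ?_
  rw [← image_union, ← image_inter _ _ (Option.some_injective _)]
  simp only [hext, tttRank_eq_natCast]
  exact_mod_cast hmod

theorem spans_empty_of_spans_lineA (hg : IsPolymatroid univ g)
    (hext : ∀ X : Finset Pt, g (X.image some) = tttRank X)
    (hneg : Spans g ((lineA (-1)).image some) none) (hpos : Spans g ((lineA 1).image some) none) :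
    Spans g ∅ none := by
  have hB (j : ZMod 3) : Spans g ((lineB j).image some) none :=
    spans_image_of_modular hg hext
      (spans_image_of_subset hg hneg (subset_union_left (s₂ := lineB j)))
      (spans_image_of_subset hg hpos (subset_union_left (s₂ := lineB j)))
      (by revert j; decide) (by revert j; decide)
  have hA₀ : Spans g ((lineA 0).image some) none :=
    spans_image_of_modular hg hext
      (spans_image_of_subset hg (hB (-1)) (subset_union_right (s₁ := lineA 0)))
      (spans_image_of_subset hg (hB 1) (subset_union_right (s₁ := lineA 0)))
      (by decide) (by decide)
  have hOrigin : Spans g (({(0, 0)} : Finset Pt).image some) none :=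
    spans_image_of_modular hg hext hA₀ (hB 0) (by decide) (by decide)
  simpa using spans_image_of_modular (U := ∅) hg hext hneg hOrigin (by decide) (by decide)

end Extension

/-- The tic-tac-toe matroid admits no single-element CI extension for the pair
`(A₋₁, A₁)`, hence it does not satisfy the common information property. -/
theorem stmt_11 :
    ∀ z : Option Pt, z ∉ (Finset.univ.image some : Finset (Option Pt)) →
      ¬ ∃ g : Finset (Option Pt) → ℝ,
        IsPolymatroid ((Finset.univ.image some : Finset (Option Pt)) ∪ {z}) g ∧
        (∀ X : Finset Pt, g (X.image some) = tttRank X) ∧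
        g ({z} ∪ (lineA (-1)).image some) = g ((lineA (-1)).image some) ∧
        g ({z} ∪ (lineA 1).image some) = g ((lineA 1).image some) ∧
        g ((lineA (-1)).image some ∪ {z}) + g ((lineA 1).image some ∪ {z}) =
          g ((lineA (-1)).image some ∪ (lineA 1).image some ∪ {z}) + g {z} := by
  rintro z hz ⟨g, hg, hext, hneg, hpos, hmod⟩
  obtain rfl : z = none := by
    cases z with
    | none => rfl
    | some p => exact absurd (mem_image_of_mem some (mem_univ p)) hz
  have hground : (univ.image some ∪ {none} : Finset (Option Pt)) = univ := by
    ext x; cases x <;> simp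
  rw [hground] at hg
  rw [← insert_eq] at hneg hpos
  have hnone : g {none} = 0 := by
    simpa [Spans, hg.1] using spans_empty_of_spans_lineA hg hext hneg hpos
  have hunion := spans_image_of_subset hg hneg (subset_union_left (s₂ := lineA 1))
  unfold Spans at hunion
  simp only [union_singleton, ← image_union] at hmod
  rw [hneg, hpos, hunion, hnone, hext, hext, hext] at hmod
  simp only [tttRank_eq_natCast] at hmod
  exact absurd (by exact_mod_cast hmod) (by decide)
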